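/- Let n ≥ 1 be an integer and t a real number. Then lim_{m→∞} Σ_{h=1}^{n} (e^{−h(h−1)t/(2m)} / 2^{2n}) e^{−ht} C(2n, n−h) Σ_{j=0}^{h−1} (−1)^j e^{(2ht)j/(2m)} C(h−1,j) · [2(2m−2j−1)] / [(2m)(2m+h−2j−1)] · (2m+h−j−1)! / (h! (2m−j−1)!) = (2/2^{2n}) Σ_{h=1}^{n} e^{−ht} C(2n, n−h) (1/h) L^{(1)}_{h−1}(2ht), where the limit is over natural numbers m → ∞. (This identifies the time-dependent part of the n-th moment of the spectral distribution μ_t^{(1,1/2)} of the free Jacobi process with parameters λ = 1, θ = 1/2.) -/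

import Mathlib

/-!
Put `ε = 1/(2m)` and `K = h - 1`. The `j`-th term of the inner sum equals
`(2/h!) ε^{-K} (-1)^j C(K,j) e^{xjε} R_j(ε)` with `x = 2ht` and the rational function
`R_j(ε) = (1-(2j+1)ε) ∏_{s<h} (1+(s-j)ε) / (1+(h-1-2j)ε)`. Up to `O(ε^h)`, `e^{xjε} R_j(ε)` is the
value at `(ε, -jε)` of a single polynomial `Q(ε, v)`: a Taylor polynomial of `e^{-xv}` times a
truncated geometric series for the denominator. Since `∑_j (-1)^j C(K,j) (-j)^a` is a `K`-th
forward difference of a power, it vanishes for `a < K` and equals `K!` for `a = K`; hence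
`ε^{-K} ∑_j (-1)^j C(K,j) Q(ε, -jε) → K! [v^K] Q(0, v)`. Finally
`Q(0, v) = T(v) (1+v)^h (1 - (-2v)^h)` with `T` the Taylor polynomial of `e^{-xv}` of degree
`< h`, and the coefficient of `v^K` in it is the Laguerre sum.
-/

open Filter Finset Polynomial Asymptotics Topology
open scoped Polynomial.Bivariate Nat fwdDiff

theorem sum_range_neg_one_pow_mul_choose_mul_neg_pow {R : Type*} [CommRing R] {K a : ℕ}
    (ha : a ≤ K) :
    ∑ j ∈ range (K + 1), (-1 : R) ^ j * K.choose j * (-(j : R)) ^ a =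
      if a = K then (K ! : R) else 0 := by
  have hΔ : Δ_[1] ^[K] (fun r : R => r ^ a) 0 = if a = K then (K ! : R) else 0 := by
    rcases ha.lt_or_eq with hlt | rfl
    · simp [fwdDiff_iter_pow_eq_zero_of_lt hlt, hlt.ne]
    · simp [fwdDiff_iter_eq_factorial]
  have hsign : ∀ j ∈ range (K + 1), (-1 : R) ^ j * K.choose j * (-(j : R)) ^ a =
      (-1) ^ (K + a) * (((-1 : ℤ) ^ (K - j) * K.choose j) • ((0 : R) + j • (1 : R)) ^ a) := by
    intro j hj
    obtain ⟨d, rfl⟩ : ∃ d, K = j + d := ⟨K - j, by have := mem_range.mp hj; omega⟩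
    simp only [add_tsub_cancel_left, zero_add, nsmul_eq_mul, mul_one, zsmul_eq_mul]
    push_cast
    rw [neg_pow, pow_add, pow_add]
    have hsq : ((-1 : R) ^ d) ^ 2 = 1 := by rw [← pow_mul, mul_comm, pow_mul]; simp
    linear_combination -(-1 : R) ^ j * (-1) ^ a * ((j + d).choose j : R) * (j : R) ^ a * hsq
  rw [sum_congr rfl hsign, ← mul_sum,
    ← fwdDiff_iter_eq_sum_shift (h := (1 : R)) (fun r : R => r ^ a) K 0, hΔ]
  split_ifs with h
  · simp [h, ← two_mul, pow_mul]
  · simp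

theorem Polynomial.evalEval_eq_sum_range' {R : Type*} [CommSemiring R] {Q : R[X][Y]} {N : ℕ}
    (hN : Q.natDegree < N) (x y : R) :
    Q.evalEval x y = ∑ a ∈ range N, (Q.coeff a).eval x * y ^ a := by
  simp [evalEval, eval_eq_sum_range' hN, eval_finsetSum]

theorem sum_range_neg_one_pow_mul_choose_mul_evalEval {R : Type*} [CommRing R] (Q : R[X][Y])
    {K N : ℕ} (hN : Q.natDegree < N) (ε : R) :
    ∑ j ∈ range (K + 1), (-1 : R) ^ j * K.choose j * Q.evalEval ε (-(j * ε)) =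
      ∑ a ∈ range N, (Q.coeff a).eval ε * ε ^ a *
        ∑ j ∈ range (K + 1), (-1 : R) ^ j * K.choose j * (-(j : R)) ^ a := by
  simp_rw [Polynomial.evalEval_eq_sum_range' hN, mul_sum]
  rw [sum_comm]
  refine sum_congr rfl fun a _ => sum_congr rfl fun j _ => ?_
  rw [neg_mul_eq_neg_mul, mul_pow]
  ring

section Sampling

variable {𝕜 : Type*} [NormedField 𝕜]

theorem tendsto_sum_range_neg_one_pow_mul_choose_mul_evalEval_div_pow (Q : 𝕜[X][Y]) (K : ℕ) :
    Tendsto (fun ε : 𝕜 =>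
        (∑ j ∈ range (K + 1), (-1 : 𝕜) ^ j * K.choose j * Q.evalEval ε (-(j * ε))) / ε ^ K)
      (𝓝[≠] 0) (𝓝 (K ! * (Q.coeff K).eval 0)) := by
  have hS : ∀ a < K, ∑ j ∈ range (K + 1), (-1 : 𝕜) ^ j * K.choose j * (-(j : 𝕜)) ^ a = 0 :=
    fun a ha => by rw [sum_range_neg_one_pow_mul_choose_mul_neg_pow ha.le, if_neg ha.ne]
  set N := Q.natDegree + K + 1
  set g : 𝕜 → 𝕜 := fun ε => ∑ a ∈ range N, (Q.coeff a).eval ε * ε ^ (a - K) *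
    ∑ j ∈ range (K + 1), (-1 : 𝕜) ^ j * K.choose j * (-(j : 𝕜)) ^ a
  have hg : Continuous g := by fun_prop
  have hg0 : g 0 = K ! * (Q.coeff K).eval 0 := by
    simp only [g]
    rw [sum_eq_single K]
    · rw [sum_range_neg_one_pow_mul_choose_mul_neg_pow le_rfl, if_pos rfl]
      simp [mul_comm]
    · intro a _ haK
      rcases haK.lt_or_gt with h | h
      · simp [hS a h]
      · simp [zero_pow (Nat.sub_ne_zero_of_lt h)]
    · intro hK
      exact absurd (mem_range.mpr (by omega)) hK
  have heq : ∀ ε : 𝕜, ε ≠ 0 → g ε =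
      (∑ j ∈ range (K + 1), (-1 : 𝕜) ^ j * K.choose j * Q.evalEval ε (-(j * ε))) / ε ^ K := by
    intro ε hε
    rw [sum_range_neg_one_pow_mul_choose_mul_evalEval Q (show Q.natDegree < N by omega), sum_div]
    refine sum_congr rfl fun a _ => ?_
    rcases lt_or_ge a K with h | h
    · simp [hS a h]
    · rw [pow_sub₀ _ hε h]
      field_simp
  rw [← hg0]
  exact ((hg.tendsto 0).mono_left nhdsWithin_le_nhds).congr'
    (eventually_nhdsWithin_of_forall heq)

theorem tendsto_sum_range_neg_one_pow_mul_choose_div_pow_of_isLittleO (Q : 𝕜[X][Y]) {K : ℕ}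
    {f : ℕ → 𝕜 → 𝕜}
    (hf : ∀ j ∈ range (K + 1), (fun ε => f j ε - Q.evalEval ε (-(j * ε))) =o[𝓝 0] (· ^ K)) :
    Tendsto (fun ε : 𝕜 => (∑ j ∈ range (K + 1), (-1 : 𝕜) ^ j * K.choose j * f j ε) / ε ^ K)
      (𝓝[≠] 0) (𝓝 (K ! * (Q.coeff K).eval 0)) := by
  have herr : (fun ε => ∑ j ∈ range (K + 1),
      (-1 : 𝕜) ^ j * K.choose j * (f j ε - Q.evalEval ε (-(j * ε)))) =o[𝓝 0] (· ^ K) :=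
    (IsLittleO.sum fun j hj => (hf j hj).const_mul_left ((-1 : 𝕜) ^ j * K.choose j)).congr_left
      fun ε => by simp only [Finset.sum_apply]
  have hlim := (tendsto_sum_range_neg_one_pow_mul_choose_mul_evalEval_div_pow Q K).add
    (herr.tendsto_div_nhds_zero.mono_left nhdsWithin_le_nhds)
  rw [add_zero] at hlim
  refine hlim.congr fun ε => ?_
  rw [← add_div, ← sum_add_distrib]
  congr 1
  exact sum_congr rfl fun j _ => by ring

end Sampling

theorem Asymptotics.IsBigO.mul_sub_mul {α R 𝕜 : Type*} [SeminormedRing R] [NormedField 𝕜]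
    {l : Filter α} {f₁ f₂ g₁ g₂ : α → R} {g : α → 𝕜}
    (h₁ : (fun x => f₁ x - g₁ x) =O[l] g) (h₂ : (fun x => f₂ x - g₂ x) =O[l] g)
    (hf₂ : f₂ =O[l] (fun _ => (1 : 𝕜))) (hg₁ : g₁ =O[l] (fun _ => (1 : 𝕜))) :
    (fun x => f₁ x * f₂ x - g₁ x * g₂ x) =O[l] g := by
  have := (h₁.mul hf₂).add ((hg₁.mul h₂).congr_right fun _ => mul_comm _ _)
  simp only [mul_one] at this
  exact this.congr_left fun x => by noncomm_ring

theorem tendsto_const_div_two_mul_natCast (c : ℝ) :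
    Tendsto (fun m : ℕ => c / (2 * (m : ℝ))) atTop (𝓝 0) :=
  tendsto_const_nhds.div_atTop (tendsto_natCast_atTop_atTop.const_mul_atTop two_pos)

namespace FreeJacobi

noncomputable def ratFactor (h : ℕ) (j ε : ℝ) : ℝ :=
  (1 - (2 * j + 1) * ε) * (∏ s ∈ range h, (1 + (s - j) * ε)) / (1 + (h - 1 - 2 * j) * ε)

/- In `ratPoly` and `expPoly` the inner variable `X` stands for `ε` and `Y` for `v = -jε`; the
geometric sum truncates `1 / (1 + (h-1)ε + 2v)`. -/

noncomputable def ratPoly (h : ℕ) : ℝ[X][Y] :=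
  (1 - C X + 2 * Y) * (∏ s ∈ range h, (1 + C ((s : ℝ[X]) * X) + Y)) *
    ∑ r ∈ range h, (-(C (((h : ℝ[X]) - 1) * X) + 2 * Y)) ^ r

noncomputable def expPoly (x : ℝ) (h : ℕ) : ℝ[X][Y] :=
  ∑ l ∈ range h, C (C ((-x) ^ l / l !)) * Y ^ l

theorem evalEval_ratPoly (h : ℕ) (j ε : ℝ) :
    (ratPoly h).evalEval ε (-(j * ε)) =
      (1 - (2 * j + 1) * ε) * (∏ s ∈ range h, (1 + (s - j) * ε)) *
        ∑ r ∈ range h, ((2 * j + 1 - h) * ε) ^ r := by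
  simp only [ratPoly, evalEval_mul, evalEval_prod, evalEval_finsetSum, evalEval_pow, evalEval_add,
    evalEval_sub, evalEval_neg, evalEval_one, evalEval_C, evalEval_X, eval_X, eval_mul,
    eval_natCast, eval_sub, eval_one]
  have h2 : evalEval ε (-(j * ε)) (2 : ℝ[X][Y]) = 2 := by
    exact_mod_cast evalEval_natCast ε (-(j * ε)) 2
  rw [h2]
  congr 1
  · congr 1
    · ring
    · exact prod_congr rfl fun s _ => by ring
  · exact sum_congr rfl fun r _ => by ring

theorem evalEval_expPoly (x : ℝ) (h : ℕ) (j ε : ℝ) :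
    (expPoly x h).evalEval ε (-(j * ε)) = ∑ l ∈ range h, (x * (j * ε)) ^ l / l ! := by
  simp only [expPoly, evalEval_finsetSum, evalEval_mul, evalEval_C, eval_C, evalEval_pow,
    evalEval_X]
  refine sum_congr rfl fun l _ => ?_
  rw [div_mul_eq_mul_div, ← mul_pow]
  ring

theorem tendsto_ratFactor (h : ℕ) (j : ℝ) : Tendsto (ratFactor h j) (𝓝 0) (𝓝 1) := by
  have hc : ContinuousAt (ratFactor h j) 0 :=
    ContinuousAt.div (by fun_prop) (by fun_prop) (by simp)
  simpa [ratFactor] using hc.tendsto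

theorem isBigO_ratFactor_sub_evalEval_ratPoly (h : ℕ) (j : ℝ) :
    (fun ε => ratFactor h j ε - (ratPoly h).evalEval ε (-(j * ε))) =O[𝓝 0] (· ^ h) := by
  have hD : ∀ᶠ ε : ℝ in 𝓝 0, 1 + (h - 1 - 2 * j) * ε ≠ 0 :=
    (Continuous.tendsto (by fun_prop : Continuous fun ε : ℝ => 1 + (h - 1 - 2 * j) * ε) 0
      ).eventually_ne (by simp)
  have hpow : (fun ε : ℝ => ((2 * j + 1 - h) * ε) ^ h) =O[𝓝 0] (· ^ h) :=
    (isBigO_const_mul_self ((2 * j + 1 - h) ^ h) _ _).congr_left fun ε => (mul_pow _ _ _).symm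
  refine (((tendsto_ratFactor h j).isBigO_one ℝ).mul hpow).congr' ?_ (by simp)
  filter_upwards [hD] with ε hε
  have hgeom := mul_neg_geom_sum ((2 * j + 1 - h) * ε) h
  rw [evalEval_ratPoly, ratFactor]
  generalize ∏ s ∈ range h, (1 + (s - j) * ε) = A
  generalize ∑ r ∈ range h, ((2 * j + 1 - h) * ε) ^ r = G at hgeom ⊢
  have hDG : (1 + (h - 1 - 2 * j) * ε) * G = 1 - ((2 * j + 1 - h) * ε) ^ h := by
    rw [← hgeom]; ring
  have hsplit : (1 - (2 * j + 1) * ε) * A * G = (1 - (2 * j + 1) * ε) * A /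
      (1 + (h - 1 - 2 * j) * ε) * (1 - ((2 * j + 1 - h) * ε) ^ h) := by
    rw [← hDG, ← mul_assoc, div_mul_cancel₀ _ hε]
  rw [hsplit]
  ring

theorem isBigO_exp_sub_evalEval_expPoly (x : ℝ) (h : ℕ) (j : ℝ) :
    (fun ε => Real.exp (x * (j * ε)) - (expPoly x h).evalEval ε (-(j * ε))) =O[𝓝 0] (· ^ h) := by
  have hlin : Tendsto (fun ε : ℝ => x * (j * ε)) (𝓝 0) (𝓝 0) := by
    simpa using (Continuous.tendsto (by fun_prop : Continuous fun ε : ℝ => x * (j * ε)) 0)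
  simp_rw [evalEval_expPoly]
  exact ((Real.exp_sub_sum_range_isBigO_pow h).comp_tendsto hlin).trans
    ((isBigO_const_mul_self ((x * j) ^ h) _ _).congr_left fun ε => by
      rw [Function.comp_apply, ← mul_pow, mul_assoc])

theorem isLittleO_exp_mul_ratFactor_sub_evalEval (x : ℝ) (K : ℕ) (j : ℝ) :
    (fun ε => Real.exp (x * (j * ε)) * ratFactor (K + 1) j ε -
      (expPoly x (K + 1) * ratPoly (K + 1)).evalEval ε (-(j * ε))) =o[𝓝 0] (· ^ K) := by
  have hexp : (fun ε : ℝ => (expPoly x (K + 1)).evalEval ε (-(j * ε))) =O[𝓝 0]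
      (fun _ => (1 : ℝ)) := by
    simp_rw [evalEval_expPoly]
    exact (Continuous.tendsto (by fun_prop) 0).isBigO_one ℝ
  simp_rw [evalEval_mul]
  exact ((isBigO_exp_sub_evalEval_expPoly x (K + 1) j).mul_sub_mul
    (isBigO_ratFactor_sub_evalEval_ratPoly (K + 1) j)
    ((tendsto_ratFactor (K + 1) j).isBigO_one ℝ) hexp).trans_isLittleO
    (isLittleO_pow_pow K.lt_succ_self)

theorem coeff_expPoly_mul_ratPoly_eval_zero (x : ℝ) {K h : ℕ} (hK : K < h) :
    ((expPoly x h * ratPoly h).coeff K).eval 0 =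
      ∑ l ∈ range (K + 1), (-x) ^ l / l ! * h.choose (K - l) := by
  set T : ℝ[X] := ∑ l ∈ range h, C ((-x) ^ l / l !) * X ^ l
  have hmap : (expPoly x h * ratPoly h).map (evalRingHom 0) =
      T * (1 + X) ^ h - T * (1 + X) ^ h * (-(2 * X)) ^ h := by
    simp only [expPoly, ratPoly, map_mul, map_natCast, map_sub, map_one, neg_add_rev,
      Polynomial.map_mul, Polynomial.map_sum, map_C, coe_evalRingHom, eval_C, Polynomial.map_pow,
      map_X, Polynomial.map_add, Polynomial.map_sub, Polynomial.map_one, eval_X, map_zero, sub_zero,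
      Polynomial.map_ofNat, Polynomial.map_prod, Polynomial.map_natCast, mul_zero, add_zero,
      prod_const, card_range, Polynomial.map_neg, neg_zero, T]
    linear_combination T * (1 + X) ^ h * mul_neg_geom_sum (-(2 * X) : ℝ[X]) h
  have hpow : (-(2 * X) : ℝ[X]) ^ h = C ((-2) ^ h) * X ^ h := by
    rw [show (-(2 * X) : ℝ[X]) = C (-2) * X by simp [C_ofNat], mul_pow, C_pow]
  rw [← coe_evalRingHom, ← coeff_map, hmap, hpow, ← mul_assoc, coeff_sub, coeff_mul_X_pow',
    if_neg (by omega), sub_zero, coeff_mul, Nat.sum_antidiagonal_eq_sum_range_succ_mk]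
  refine sum_congr rfl fun l hl => ?_
  have hl : l < h := by have := mem_range.mp hl; omega
  simp [T, coeff_one_add_X_pow, hl]

theorem summand_eq_ratFactor (x : ℝ) {h j m : ℕ} (hj : j < h) (hm : h ≤ m) :
    (-1 : ℝ) ^ j * Real.exp (x * j / (2 * m)) * ((h - 1).choose j : ℝ) *
        ((2 * (2 * (m : ℝ) - 2 * j - 1)) / ((2 * m) * (2 * m + h - 2 * j - 1))) *
        ((2 * m + h - j - 1)! : ℝ) / (h ! * (2 * m - j - 1)! : ℝ) =
      2 / h ! * ((-1) ^ j * ((h - 1).choose j : ℝ) *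
        (Real.exp (x * (j * (1 / (2 * m)))) * ratFactor h j (1 / (2 * m)))) /
          (1 / (2 * (m : ℝ))) ^ (h - 1) := by
  obtain ⟨r, hr⟩ : ∃ r, 2 * m = r + j + 1 := ⟨2 * m - j - 1, by omega⟩
  obtain ⟨K, rfl⟩ : ∃ K, h = K + 1 := ⟨h - 1, by omega⟩
  have hmr : (2 * m : ℝ) = r + j + 1 := by exact_mod_cast hr
  have hj' : (j : ℝ) ≤ K := by exact_mod_cast Nat.lt_succ_iff.mp hj
  have hm' : (K : ℝ) + 1 ≤ m := by exact_mod_cast hm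
  have hM : (2 * m : ℝ) ≠ 0 := ne_of_gt (by linarith)
  have hfact : ((2 * m + (K + 1) - j - 1)! : ℝ) =
      (2 * m - j - 1)! * ∏ s ∈ range (K + 1), (2 * m - j + s : ℝ) := by
    rw [show 2 * m + (K + 1) - j - 1 = r + (K + 1) by omega, show 2 * m - j - 1 = r by omega,
      ← Nat.factorial_mul_ascFactorial, Nat.ascFactorial_eq_prod_range]
    push_cast
    exact congrArg _ (prod_congr rfl fun s _ => by rw [hmr]; ring)
  rw [hfact, ratFactor, show x * j / (2 * m) = x * (j * (1 / (2 * m))) by ring]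
  push_cast
  generalize Real.exp (x * (j * (1 / (2 * m)))) = e
  have hD : (2 * m + (K + 1) - 2 * j - 1 : ℝ) ≠ 0 := ne_of_gt (by linarith)
  generalize (2 * m : ℝ) = M at *
  have hprod : ∏ s ∈ range (K + 1), (M - j + s) =
      M ^ (K + 1) * ∏ s ∈ range (K + 1), (1 + (s - j : ℝ) * (1 / M)) := by
    rw [← card_range (K + 1), ← prod_const M, card_range, ← prod_mul_distrib]
    exact prod_congr rfl fun s _ => by field_simp; ring
  have hratio : (1 - (2 * j + 1) * (1 / M)) / (1 + ((K + 1 : ℝ) - 1 - 2 * j) * (1 / M)) =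
      (M - 2 * j - 1) / (M + (K + 1) - 2 * j - 1) := by
    rw [div_eq_div_iff _ hD]
    · field_simp; ring
    · rw [show 1 + ((K + 1 : ℝ) - 1 - 2 * j) * (1 / M) = (M + (K + 1) - 2 * j - 1) / M by
        field_simp; ring]
      exact div_ne_zero hD hM
  rw [hprod]
  generalize ∏ s ∈ range (K + 1), (1 + (s - j : ℝ) * (1 / M)) = A
  rw [mul_div_right_comm _ A, hratio, one_div_pow]
  field_simp
  ring

theorem tendsto_sum_range_summand (x : ℝ) {h : ℕ} (hh : 0 < h) :
    Tendsto (fun m : ℕ => ∑ j ∈ range h,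
        (-1 : ℝ) ^ j * Real.exp (x * (j : ℝ) / (2 * (m : ℝ))) * ((h - 1).choose j : ℝ) *
          ((2 * (2 * (m : ℝ) - 2 * (j : ℝ) - 1)) /
            ((2 * (m : ℝ)) * (2 * (m : ℝ) + (h : ℝ) - 2 * (j : ℝ) - 1))) *
          ((2 * m + h - j - 1)! : ℝ) / ((h ! : ℝ) * ((2 * m - j - 1)! : ℝ)))
      atTop (𝓝 (2 / h * ∑ l ∈ range h, (h.choose (l + 1) : ℝ) * (-x) ^ l / l !)) := by
  obtain ⟨K, rfl⟩ : ∃ K, h = K + 1 := ⟨h - 1, by omega⟩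
  have hε : Tendsto (fun m : ℕ => 1 / (2 * (m : ℝ))) atTop (𝓝[≠] 0) :=
    tendsto_nhdsWithin_iff.mpr ⟨tendsto_const_div_two_mul_natCast 1,
      (eventually_ge_atTop 1).mono fun m hm => one_div_ne_zero
        (mul_ne_zero two_ne_zero (Nat.cast_ne_zero.mpr (by omega)))⟩
  have hlim := ((tendsto_sum_range_neg_one_pow_mul_choose_div_pow_of_isLittleO
    (f := fun j ε => Real.exp (x * (j * ε)) * ratFactor (K + 1) j ε)
    (expPoly x (K + 1) * ratPoly (K + 1))
    (fun j _ => isLittleO_exp_mul_ratFactor_sub_evalEval x K j)).comp hε).const_mul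
      (2 / (K + 1)! : ℝ)
  rw [coeff_expPoly_mul_ratPoly_eval_zero x K.lt_succ_self] at hlim
  convert hlim.congr' ?_ using 2
  · rw [mul_sum, mul_sum, mul_sum]
    refine sum_congr rfl fun l hl => ?_
    have hl : l ≤ K := Nat.lt_succ_iff.mp (mem_range.mp hl)
    rw [Nat.succ_eq_add_one, Nat.choose_symm_of_eq_add (show K + 1 = (K - l) + (l + 1) by omega),
      Nat.factorial_succ]
    push_cast
    field_simp
  · filter_upwards [eventually_ge_atTop (K + 1)] with m hm
    simp only [Function.comp_apply, sum_div, mul_sum]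
    refine sum_congr rfl fun j hj => ?_
    rw [summand_eq_ratFactor x (mem_range.mp hj) hm, Nat.add_sub_cancel]
    ring

end FreeJacobi

open FreeJacobi

theorem stmt_4 (n : ℕ) (t : ℝ) :
    Tendsto (fun m : ℕ =>
      ∑ h ∈ Finset.Icc 1 n,
        (Real.exp (-((h : ℝ) * ((h : ℝ) - 1) * t) / (2 * (m : ℝ))) / 2 ^ (2 * n)) *
          Real.exp (-((h : ℝ) * t)) * ((2 * n).choose (n - h) : ℝ) *
          ∑ j ∈ Finset.range h,
            (-1 : ℝ) ^ j * Real.exp ((2 * (h : ℝ) * t) * (j : ℝ) / (2 * (m : ℝ))) *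
              ((h - 1).choose j : ℝ) *
              ((2 * (2 * (m : ℝ) - 2 * (j : ℝ) - 1)) /
                ((2 * (m : ℝ)) * (2 * (m : ℝ) + (h : ℝ) - 2 * (j : ℝ) - 1))) *
              ((2 * m + h - j - 1).factorial : ℝ) /
              ((h.factorial : ℝ) * ((2 * m - j - 1).factorial : ℝ)))
      atTop
      (nhds ((2 / 2 ^ (2 * n)) *
        ∑ h ∈ Finset.Icc 1 n,
          Real.exp (-((h : ℝ) * t)) * ((2 * n).choose (n - h) : ℝ) * (1 / (h : ℝ)) *
            ∑ l ∈ Finset.range h,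
              (h.choose (l + 1) : ℝ) * (-(2 * (h : ℝ) * t)) ^ l / (l.factorial : ℝ))) := by
  have hexp (c : ℝ) : Tendsto (fun m : ℕ => Real.exp (c / (2 * (m : ℝ)))) atTop (𝓝 1) := by
    simpa [Function.comp_def] using
      (Real.continuous_exp.tendsto 0).comp (tendsto_const_div_two_mul_natCast c)
  convert tendsto_finsetSum (Icc 1 n) fun h hh =>
    ((((hexp (-((h : ℝ) * ((h : ℝ) - 1) * t))).div_const (2 ^ (2 * n))).mul_const
      (Real.exp (-((h : ℝ) * t)))).mul_const ((2 * n).choose (n - h) : ℝ)).mul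
      (tendsto_sum_range_summand (2 * h * t) (mem_Icc.mp hh).1) using 2
  rw [mul_sum]
  exact sum_congr rfl fun h _ => by ring
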